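/- arXiv:2512.10311 — 3 statements merged into one kernel-verified Lean document; each statement's English description precedes it below -/
import Mathlib

section
/- Let A: ℝⁿ → 2^{ℝⁿ} be a maximal monotone operator, i.e., A is monotone and (x₁,y₁) ∈ Gr(A) if and only if ⟨x₁ - x₂, y₁ - y₂⟩ ≥ 0 for all (x₂,y₂) ∈ Gr(A). Then for any compact subset Γ of the interior of the domain D(A) = {x : A(x) ≠ ∅}, the set ⋃_{x ∈ Γ} A(x) is bounded. -/
open scoped InnerProductSpace
open Metric Set

/-! A monotone operator is bounded near any point `x` around which it is bounded on a net:
if `y ∈ A x` and `p` is close to the point `q` at distance `δ` from `x` in the direction of `y`,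
then monotonicity against any `z ∈ A p` gives `⟪p - x, y⟫ ≤ ⟪p - x, z⟫`, where the left side is
about `δ ‖y‖` and the right side is `O(δ ‖z‖)`. On a compact neighbourhood of `Γ` inside the
domain, finitely many points with one selected value each form such a net around every `x ∈ Γ`. -/

def IsMonotoneOperator {E : Type*} [NormedAddCommGroup E] [InnerProductSpace ℝ E]
    (A : E → Set E) : Prop :=
  ∀ x₁ x₂ y₁ y₂, y₁ ∈ A x₁ → y₂ ∈ A x₂ → 0 ≤ ⟪x₁ - x₂, y₁ - y₂⟫_ℝ

namespace IsMonotoneOperator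

variable {E : Type*} [NormedAddCommGroup E] [InnerProductSpace ℝ E] {A : E → Set E}

theorem inner_le_inner (hA : IsMonotoneOperator A) {x y p z : E} (hy : y ∈ A x)
    (hz : z ∈ A p) : ⟪p - x, y⟫_ℝ ≤ ⟪p - x, z⟫_ℝ := by
  have h := hA x p y z hy hz
  rw [← neg_sub p x, inner_neg_left, inner_sub_right] at h
  linarith

theorem mul_norm_le_of_forall_sphere (hA : IsMonotoneOperator A) {x y : E} (hy : y ∈ A x)
    {δ ε C : ℝ} (hδ : 0 ≤ δ) (hε : 0 ≤ ε) (hC : 0 ≤ C)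
    (hnet : ∀ q ∈ sphere x δ, ∃ p ∈ closedBall q ε, ∃ z ∈ A p, ‖z‖ ≤ C) :
    (δ - ε) * ‖y‖ ≤ (δ + ε) * C := by
  rcases eq_or_ne y 0 with rfl | hy0
  · simpa using mul_nonneg (add_nonneg hδ hε) hC
  have hny : 0 < ‖y‖ := norm_pos_iff.mpr hy0
  set q := x + (δ / ‖y‖) • y
  have hqx : ⟪q - x, y⟫_ℝ = δ * ‖y‖ := by
    rw [add_sub_cancel_left, real_inner_smul_left, real_inner_self_eq_norm_sq]
    field_simp
  have hq : q ∈ sphere x δ := by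
    rw [mem_sphere, dist_eq_norm, add_sub_cancel_left, norm_smul, Real.norm_of_nonneg
      (by positivity)]
    field_simp
  obtain ⟨p, hpq, z, hz, hzC⟩ := hnet q hq
  have hpq' : ‖p - q‖ ≤ ε := by rwa [← dist_eq_norm]
  have hpx : ‖p - x‖ ≤ δ + ε := by
    calc ‖p - x‖ = ‖(p - q) + (q - x)‖ := by rw [sub_add_sub_cancel]
      _ ≤ ‖p - q‖ + ‖q - x‖ := norm_add_le _ _
      _ ≤ ε + δ := by rw [← dist_eq_norm q x, mem_sphere.mp hq]; linarith
      _ = δ + ε := add_comm ε δ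
  calc (δ - ε) * ‖y‖ = δ * ‖y‖ - ε * ‖y‖ := sub_mul δ ε ‖y‖
    _ ≤ ⟪q - x, y⟫_ℝ + ⟪p - q, y⟫_ℝ := by
        have := neg_le_of_abs_le ((abs_real_inner_le_norm (p - q) y).trans
          (mul_le_mul_of_nonneg_right hpq' hny.le))
        linarith
    _ = ⟪p - x, y⟫_ℝ := by rw [← inner_add_left, add_comm, sub_add_sub_cancel]
    _ ≤ ⟪p - x, z⟫_ℝ := hA.inner_le_inner hy hz
    _ ≤ ‖p - x‖ * ‖z‖ := real_inner_le_norm _ _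
    _ ≤ (δ + ε) * C := mul_le_mul hpx hzC (norm_nonneg z) (hδ.trans (by linarith))

end IsMonotoneOperator

theorem IsCompact.exists_closedBall_mem_norm_le {X E : Type*} [PseudoMetricSpace X]
    [SeminormedAddCommGroup E] {A : X → Set E} {K : Set X} (hK : IsCompact K)
    (hA : ∀ p ∈ K, (A p).Nonempty) {ε : ℝ} (hε : 0 < ε) :
    ∃ C, 0 ≤ C ∧ ∀ q ∈ K, ∃ p ∈ closedBall q ε, ∃ z ∈ A p, ‖z‖ ≤ C := by
  obtain ⟨t, htK, ht, hcover⟩ := hK.finite_cover_balls hε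
  choose! z hz using hA
  obtain ⟨C, hC⟩ := (ht.image fun p => ‖z p‖).bddAbove
  refine ⟨max C 0, le_max_right _ _, fun q hq => ?_⟩
  obtain ⟨p, hpt, hqp⟩ := mem_iUnion₂.mp (hcover hq)
  exact ⟨p, mem_closedBall_comm.mp (ball_subset_closedBall hqp), z p, hz p (htK hpt),
    (hC (mem_image_of_mem _ hpt)).trans (le_max_left _ _)⟩

theorem maximalMonotone_locally_bounded_general {n : ℕ}
    (A : EuclideanSpace ℝ (Fin n) → Set (EuclideanSpace ℝ (Fin n)))
    (hmono : ∀ x₁ x₂ y₁ y₂, y₁ ∈ A x₁ → y₂ ∈ A x₂ → 0 ≤ ⟪x₁ - x₂, y₁ - y₂⟫_ℝ)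
    (Γ : Set (EuclideanSpace ℝ (Fin n))) (hΓc : IsCompact Γ)
    (hΓ : Γ ⊆ interior {x | (A x).Nonempty}) :
    Bornology.IsBounded (⋃ x ∈ Γ, A x) := by
  obtain ⟨δ, hδ, hK⟩ := hΓc.exists_cthickening_subset_open isOpen_interior hΓ
  obtain ⟨C, hC, hnet⟩ := hΓc.cthickening.exists_closedBall_mem_norm_le
    (fun _ hp => interior_subset (s := {x | (A x).Nonempty}) (hK hp)) (half_pos hδ)
  refine isBounded_iff_forall_norm_le.mpr ⟨3 * C, fun y hy => ?_⟩
  obtain ⟨x, hx, hy⟩ := mem_iUnion₂.mp hy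
  have hbound := IsMonotoneOperator.mul_norm_le_of_forall_sphere hmono hy hδ.le
    (half_pos hδ).le hC fun q hq => hnet q (mem_cthickening_of_dist_le q x δ Γ hx hq.le)
  have : δ / 2 * ‖y‖ ≤ δ / 2 * (3 * C) := by linarith
  exact le_of_mul_le_mul_left this (half_pos hδ)

/-- A maximal monotone operator on ℝⁿ is locally bounded on the interior of its domain:
for any compact subset `Γ` of the interior of `D(A)`, the set `⋃ x ∈ Γ, A x` is bounded. -/
theorem maximalMonotone_locally_bounded {n : ℕ}
    (A : EuclideanSpace ℝ (Fin n) → Set (EuclideanSpace ℝ (Fin n)))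
    (hmono : ∀ x₁ x₂ y₁ y₂, y₁ ∈ A x₁ → y₂ ∈ A x₂ → 0 ≤ ⟪x₁ - x₂, y₁ - y₂⟫_ℝ)
    (hmax : ∀ x₁ y₁,
      (y₁ ∈ A x₁ ↔ ∀ x₂ y₂, y₂ ∈ A x₂ → 0 ≤ ⟪x₁ - x₂, y₁ - y₂⟫_ℝ))
    (Γ : Set (EuclideanSpace ℝ (Fin n))) (hΓc : IsCompact Γ)
    (hΓ : Γ ⊆ interior {x | (A x).Nonempty}) :
    Bornology.IsBounded (⋃ x ∈ Γ, A x) :=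
  maximalMonotone_locally_bounded_general A hmono Γ hΓc hΓ
end

section
/- Let A be a maximal monotone operator on ℝⁿ. Then the closure of the domain D(A) is a convex subset of ℝⁿ. -/
open scoped InnerProductSpace

lemma minty_arith_bound (X Y r c : ℝ) (B : ℝ) (hX : 0 ≤ X) (hY : 0 ≤ Y) (hc1 : 1 ≤ c)
    (hBc : B ≤ c) (hrlow : -(c * X) - c * Y - c ≤ r) (hpsi : r + (X ^ 2 + Y ^ 2) / 2 ≤ B) :
    X ≤ 13 * c ^ 2 ∧ Y ≤ 13 * c ^ 2 ∧ |r| ≤ 13 * c ^ 2 := by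
  have hq : X ^ 2 + Y ^ 2 ≤ 2 * c * X + 2 * c * Y + 4 * c := by linarith
  have hX6 : X ≤ 6 * c := by nlinarith [sq_nonneg (X - c), sq_nonneg (Y - c), sq_nonneg c]
  have hY6 : Y ≤ 6 * c := by nlinarith [sq_nonneg (X - c), sq_nonneg (Y - c), sq_nonneg c]
  refine ⟨by nlinarith, by nlinarith, ?_⟩
  rw [abs_le]
  constructor
  · nlinarith [mul_le_mul_of_nonneg_left hX6 (by linarith : (0:ℝ) ≤ c),
      mul_le_mul_of_nonneg_left hY6 (by linarith : (0:ℝ) ≤ c)]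
  · nlinarith

section core
variable {F : Type*} [NormedAddCommGroup F] [InnerProductSpace ℝ F] [ProperSpace F]

set_option maxHeartbeats 1000000 in
lemma minty_core (G : Set (F × F)) (hne : G.Nonempty)
    (hG : ∀ p : F × F, p ∈ G ↔ ∀ q ∈ G, 0 ≤ ⟪p.1 - q.1, p.2 - q.2⟫_ℝ) :
    ∃ p ∈ G, p.1 + p.2 = 0 := by
  classical
  obtain ⟨p₀, hp₀⟩ := hne
  have hmono : ∀ p ∈ G, ∀ q ∈ G, 0 ≤ ⟪p.1 - q.1, p.2 - q.2⟫_ℝ := fun p hp => (hG p).1 hp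
  set S : Set ((F × F) × ℝ) :=
    {w | ∀ q ∈ G, ⟪w.1.1, q.2⟫_ℝ + ⟪q.1, w.1.2⟫_ℝ - ⟪q.1, q.2⟫_ℝ ≤ w.2} with hSdef
  set Ψ : ((F × F) × ℝ) → ℝ := fun w => w.2 + (‖w.1.1‖ ^ 2 + ‖w.1.2‖ ^ 2) / 2 with hΨdef
  -- graph points (with value ⟪p.1,p.2⟫) lie in S
  have hgraphS : ∀ p ∈ G, ((p, ⟪p.1, p.2⟫_ℝ) : (F × F) × ℝ) ∈ S := by
    intro p hp q hq
    have h := hmono p hp q hq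
    rw [inner_sub_left, inner_sub_right, inner_sub_right] at h
    simp only
    linarith
  have hlow : ∀ w ∈ S, ⟪w.1.1, w.1.2⟫_ℝ ≤ w.2 := by
    intro w hw
    by_contra hcon
    push_neg at hcon
    have hmem : w.1 ∈ G := by
      rw [hG]
      intro q hq
      have h1 := hw q hq
      rw [inner_sub_left, inner_sub_right, inner_sub_right]
      linarith
    have h2 := hw w.1 hmem
    linarith
  have hSclosed : IsClosed S := by
    have : S = ⋂ (q : F × F) (_ : q ∈ G),
        {w : (F × F) × ℝ | ⟪w.1.1, q.2⟫_ℝ + ⟪q.1, w.1.2⟫_ℝ - ⟪q.1, q.2⟫_ℝ ≤ w.2} := by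
      ext w; simp [hSdef, Set.mem_iInter]
    rw [this]
    refine isClosed_iInter fun q => isClosed_iInter fun _ => isClosed_le ?_ ?_
    · exact ((continuous_fst.fst.inner continuous_const).add
        (continuous_const.inner continuous_fst.snd)).sub continuous_const
    · exact continuous_snd
  have hSconv : Convex ℝ S := by
    intro w1 hw1 w2 hw2 s t hs ht hst
    have ht' : t = 1 - s := by linarith
    subst ht'
    intro q hq
    have h1 := hw1 q hq
    have h2 := hw2 q hq
    simp only [Prod.fst_add, Prod.snd_add, Prod.smul_fst, Prod.smul_snd, smul_eq_mul]
    rw [inner_add_left, inner_add_right, real_inner_smul_left, real_inner_smul_left,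
      real_inner_smul_right, real_inner_smul_right]
    nlinarith [mul_le_mul_of_nonneg_left h1 hs, mul_le_mul_of_nonneg_left h2 ht]
  -- base point and bounds
  set w₀ : (F × F) × ℝ := (p₀, ⟪p₀.1, p₀.2⟫_ℝ) with hw₀def
  have hw₀S : w₀ ∈ S := hgraphS p₀ hp₀
  set B := Ψ w₀ with hBdef
  set c := ‖p₀.1‖ + ‖p₀.2‖ + |⟪p₀.1, p₀.2⟫_ℝ| + |B| + 1 with hcdef
  have hc1 : 1 ≤ c := by
    have := norm_nonneg p₀.1; have := norm_nonneg p₀.2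
    have := abs_nonneg ⟪p₀.1, p₀.2⟫_ℝ; have := abs_nonneg B
    simp only [hcdef]; linarith
  set R := 13 * c ^ 2 with hRdef
  set Ball : Set ((F × F) × ℝ) :=
    (Metric.closedBall (0 : F) R ×ˢ Metric.closedBall (0 : F) R) ×ˢ Metric.closedBall (0 : ℝ) R
    with hBalldef
  have hballmem : ∀ w : (F × F) × ℝ, ‖w.1.1‖ ≤ R → ‖w.1.2‖ ≤ R → |w.2| ≤ R → w ∈ Ball := by
    intro w h1 h2 h3
    refine ⟨⟨?_, ?_⟩, ?_⟩ <;>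
      simp [Metric.mem_closedBall, dist_zero_right, Real.norm_eq_abs, h1, h2, h3]
  have hbound : ∀ w ∈ S, Ψ w ≤ B → w ∈ Ball := by
    intro w hw hΨw
    have h0 := hlow w hw
    have h1 := hw p₀ hp₀
    have hXnn := norm_nonneg w.1.1
    have hYnn := norm_nonneg w.1.2
    have cs1 := abs_real_inner_le_norm w.1.1 p₀.2
    have cs2 := abs_real_inner_le_norm p₀.1 w.1.2
    have cs3 := abs_real_inner_le_norm w.1.1 w.1.2
    have hBc : B ≤ c := by
      have := abs_nonneg B
      have hB := le_abs_self B
      simp only [hcdef]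
      have := norm_nonneg p₀.1; have := norm_nonneg p₀.2
      have := abs_nonneg ⟪p₀.1, p₀.2⟫_ℝ
      linarith
    have hn1 : ‖p₀.1‖ ≤ c := by
      simp only [hcdef]
      have := norm_nonneg p₀.2; have := abs_nonneg ⟪p₀.1, p₀.2⟫_ℝ
      have := abs_nonneg B; linarith
    have hn2 : ‖p₀.2‖ ≤ c := by
      simp only [hcdef]
      have := norm_nonneg p₀.1; have := abs_nonneg ⟪p₀.1, p₀.2⟫_ℝ
      have := abs_nonneg B; linarith
    have hn3 : |⟪p₀.1, p₀.2⟫_ℝ| ≤ c := by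
      simp only [hcdef]
      have := norm_nonneg p₀.1; have := norm_nonneg p₀.2
      have := abs_nonneg B; linarith
    have hΨw' : w.2 + (‖w.1.1‖ ^ 2 + ‖w.1.2‖ ^ 2) / 2 ≤ B := hΨw
    have hrlow : -(c * ‖w.1.1‖) - c * ‖w.1.2‖ - c ≤ w.2 := by
      have e1 : -(‖w.1.1‖ * ‖p₀.2‖) ≤ ⟪w.1.1, p₀.2⟫_ℝ := neg_le_of_abs_le cs1
      have e2 : -(‖p₀.1‖ * ‖w.1.2‖) ≤ ⟪p₀.1, w.1.2⟫_ℝ := neg_le_of_abs_le cs2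
      have e3 : ⟪p₀.1, p₀.2⟫_ℝ ≤ c := le_trans (le_abs_self _) hn3
      nlinarith [mul_le_mul_of_nonneg_left hn2 hXnn, mul_le_mul_of_nonneg_right hn1 hYnn]
    obtain ⟨hXb, hYb, hrb⟩ :=
      minty_arith_bound ‖w.1.1‖ ‖w.1.2‖ w.2 c B hXnn hYnn hc1 hBc hrlow hΨw'
    exact hballmem w hXb hYb hrb
  have hBallcomp : IsCompact Ball :=
    ((isCompact_closedBall _ _).prod (isCompact_closedBall _ _)).prod (isCompact_closedBall _ _)
  have hKcomp : IsCompact (S ∩ Ball) := hBallcomp.inter_left hSclosed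
  have hw₀B : w₀ ∈ Ball := hbound w₀ hw₀S le_rfl
  have hΨcont : Continuous Ψ := by fun_prop
  obtain ⟨wm, hwmK, hwmmin⟩ := hKcomp.exists_isMinOn ⟨w₀, hw₀S, hw₀B⟩ hΨcont.continuousOn
  have hwmS : wm ∈ S := hwmK.1
  have hglobal : ∀ w ∈ S, Ψ wm ≤ Ψ w := by
    intro w hw
    by_cases hcase : Ψ w ≤ B
    · exact isMinOn_iff.mp hwmmin w ⟨hw, hbound w hw hcase⟩
    · have hB : Ψ wm ≤ B := isMinOn_iff.mp hwmmin w₀ ⟨hw₀S, hw₀B⟩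
      push_neg at hcase; linarith
  obtain ⟨⟨a, b⟩, ρ⟩ := wm
  have hfo : ∀ q ∈ G, ρ + ‖a‖ ^ 2 + ‖b‖ ^ 2 ≤ ⟪q.1, q.2⟫_ℝ + ⟪a, q.1⟫_ℝ + ⟪b, q.2⟫_ℝ := by
    intro q hq
    have hwqS := hgraphS q hq
    have key : ∀ t : ℝ, 0 < t → t ≤ 1 →
        0 ≤ (⟪q.1, q.2⟫_ℝ + ⟪a, q.1⟫_ℝ + ⟪b, q.2⟫_ℝ - (ρ + ‖a‖ ^ 2 + ‖b‖ ^ 2))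
          + t * ((‖q.1 - a‖ ^ 2 + ‖q.2 - b‖ ^ 2) / 2) := by
      intro t ht ht1
      have hmem : (1 - t) • (((a, b), ρ) : (F × F) × ℝ) + t • ((q, ⟪q.1, q.2⟫_ℝ)) ∈ S :=
        hSconv hwmS hwqS (by linarith) ht.le (by ring)
      have hcmp : ρ + (‖a‖ ^ 2 + ‖b‖ ^ 2) / 2 ≤ ((1 - t) * ρ + t * ⟪q.1, q.2⟫_ℝ)
          + (‖(1 - t) • a + t • q.1‖ ^ 2 + ‖(1 - t) • b + t • q.2‖ ^ 2) / 2 := hglobal _ hmem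
      have hx1 : (1 - t) • a + t • q.1 = a + t • (q.1 - a) := by module
      have hx2 : (1 - t) • b + t • q.2 = b + t • (q.2 - b) := by module
      have e1 : ‖a + t • (q.1 - a)‖ ^ 2
          = ‖a‖ ^ 2 + 2 * (t * ⟪a, q.1 - a⟫_ℝ) + t ^ 2 * ‖q.1 - a‖ ^ 2 := by
        rw [norm_add_sq_real, real_inner_smul_right, norm_smul, Real.norm_eq_abs, mul_pow, sq_abs]
      have e2 : ‖b + t • (q.2 - b)‖ ^ 2
          = ‖b‖ ^ 2 + 2 * (t * ⟪b, q.2 - b⟫_ℝ) + t ^ 2 * ‖q.2 - b‖ ^ 2 := by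
        rw [norm_add_sq_real, real_inner_smul_right, norm_smul, Real.norm_eq_abs, mul_pow, sq_abs]
      have ia : ⟪a, q.1 - a⟫_ℝ = ⟪a, q.1⟫_ℝ - ‖a‖ ^ 2 := by
        rw [inner_sub_right, real_inner_self_eq_norm_sq]
      have ib : ⟪b, q.2 - b⟫_ℝ = ⟪b, q.2⟫_ℝ - ‖b‖ ^ 2 := by
        rw [inner_sub_right, real_inner_self_eq_norm_sq]
      rw [hx1, hx2, e1, e2, ia, ib] at hcmp
      -- hcmp now gives 0 ≤ t * L + t^2 * M ; divide by t
      by_contra hneg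
      push_neg at hneg
      linarith [mul_neg_of_pos_of_neg ht hneg, hcmp]
    have hM : 0 ≤ (‖q.1 - a‖ ^ 2 + ‖q.2 - b‖ ^ 2) / 2 := by positivity
    by_contra hcon
    push_neg at hcon
    set L := ⟪q.1, q.2⟫_ℝ + ⟪a, q.1⟫_ℝ + ⟪b, q.2⟫_ℝ - (ρ + ‖a‖ ^ 2 + ‖b‖ ^ 2) with hLdef
    set M := (‖q.1 - a‖ ^ 2 + ‖q.2 - b‖ ^ 2) / 2 with hMdef
    have hL : L < 0 := by simp only [hLdef]; linarith
    have ht0 : 0 < min 1 ((-L) / (2 * M + 1)) :=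
      lt_min one_pos (div_pos (by linarith) (by linarith))
    have hkey := key _ ht0 (min_le_left _ _)
    have hle : min 1 ((-L) / (2 * M + 1)) ≤ (-L) / (2 * M + 1) := min_le_right _ _
    have h3 : min 1 ((-L) / (2 * M + 1)) * (2 * M + 1) ≤ -L :=
      (le_div_iff₀ (by linarith : (0:ℝ) < 2 * M + 1)).mp hle
    linarith [hkey, h3, mul_nonneg ht0.le hM, ht0]
  have hrho : ⟪a, b⟫_ℝ ≤ ρ := hlow _ hwmS
  have hnb : ((-b, -a) : F × F) ∈ G := by
    rw [hG]
    intro q hq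
    have h := hfo q hq
    have hm1 : ((-b, -a) : F × F).1 - q.1 = -(b + q.1) := by dsimp only; abel
    have hm2 : ((-b, -a) : F × F).2 - q.2 = -(a + q.2) := by dsimp only; abel
    rw [hm1, hm2, inner_neg_neg, inner_add_left, inner_add_right, inner_add_right]
    have c1 := real_inner_comm b a
    have c2 := real_inner_comm q.1 a
    have hns := norm_add_sq_real a b
    linarith [sq_nonneg ‖a + b‖]
  have h2 : ρ + ‖a‖ ^ 2 + ‖b‖ ^ 2
      ≤ ⟪(-b : F), (-a : F)⟫_ℝ + ⟪a, (-b : F)⟫_ℝ + ⟪b, (-a : F)⟫_ℝ := hfo (-b, -a) hnb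
  rw [inner_neg_neg, inner_neg_right, inner_neg_right] at h2
  have hab : ‖a + b‖ ^ 2 ≤ 0 := by
    rw [norm_add_sq_real]
    have := real_inner_comm a b
    linarith
  have hab0 : a + b = 0 := by
    have h4 : ‖a + b‖ ^ 2 = 0 := le_antisymm hab (sq_nonneg _)
    exact norm_eq_zero.mp (pow_eq_zero_iff two_ne_zero |>.mp h4)
  refine ⟨(-b, -a), hnb, ?_⟩
  dsimp only
  rw [← neg_add, add_comm b a, hab0, neg_zero]

end core

lemma seg_arith (m s lam ε na nb nα nβ P1 P2 : ℝ)
    (hs : 0 ≤ s) (hs1 : s ≤ 1) (hlam : 0 < lam) (hε : 0 < ε)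
    (hm : 0 ≤ m) (hna : 0 ≤ na) (hnb : 0 ≤ nb) (hnα : 0 ≤ nα) (hnβ : 0 ≤ nβ)
    (hP1 : P1 ≤ (na + m) * nα) (hP2 : P2 ≤ (nb + m) * nβ)
    (hmain : m ^ 2 ≤ lam * (s * P1 + (1 - s) * P2))
    (hl1 : lam ≤ ε ^ 2 / (4 * (na * nα + nb * nβ + 1)))
    (hl2 : lam ≤ ε / (2 * (nα + nβ + 1))) : m < ε := by
  have h1 : lam * (4 * (na * nα + nb * nβ + 1)) ≤ ε ^ 2 :=
    (le_div_iff₀ (by positivity)).mp hl1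
  have h2 : lam * (2 * (nα + nβ + 1)) ≤ ε := (le_div_iff₀ (by positivity)).mp hl2
  have h1s : (0:ℝ) ≤ 1 - s := by linarith
  have hstep : s * P1 + (1 - s) * P2 ≤ (na * nα + nb * nβ) + m * (nα + nβ) := by
    nlinarith [mul_le_mul_of_nonneg_left hP1 hs, mul_le_mul_of_nonneg_left hP2 h1s,
      mul_nonneg (mul_nonneg h1s hna) hnα, mul_nonneg (mul_nonneg hs hnb) hnβ,
      mul_nonneg (mul_nonneg h1s hm) hnα, mul_nonneg (mul_nonneg hs hm) hnβ]
  have hmm : m ^ 2 ≤ lam * ((na * nα + nb * nβ + 1) + m * (nα + nβ + 1)) := by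
    have hh := mul_le_mul_of_nonneg_left hstep hlam.le
    nlinarith [mul_nonneg hlam.le hm, hlam.le]
  nlinarith [h1, h2, hmm, mul_le_mul_of_nonneg_right h2 hm, hm, hε, sq_nonneg (m - ε)]

lemma minty_surjective {n : ℕ} (A : EuclideanSpace ℝ (Fin n) → Set (EuclideanSpace ℝ (Fin n)))
    (hmono : ∀ x₁ x₂ y₁ y₂, y₁ ∈ A x₁ → y₂ ∈ A x₂ → 0 ≤ ⟪x₁ - x₂, y₁ - y₂⟫_ℝ)
    (hmax : ∀ x₁ y₁,
      (y₁ ∈ A x₁ ↔ ∀ x₂ y₂, y₂ ∈ A x₂ → 0 ≤ ⟪x₁ - x₂, y₁ - y₂⟫_ℝ))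
    (z : EuclideanSpace ℝ (Fin n)) (lam : ℝ) (hlam : 0 < lam) :
    ∃ x y, y ∈ A x ∧ x + lam • y = z := by
  have hne : ∃ x y, y ∈ A x := by
    by_contra h
    push_neg at h
    exact h 0 0 ((hmax 0 0).2 fun x₂ y₂ hy₂ => absurd hy₂ (h x₂ y₂))
  obtain ⟨x₀, y₀, hy₀⟩ := hne
  set G : Set (EuclideanSpace ℝ (Fin n) × EuclideanSpace ℝ (Fin n)) :=
    {p | ∃ y, y ∈ A (p.1 + z) ∧ p.2 = lam • y} with hGdef
  have hGmax : ∀ p : EuclideanSpace ℝ (Fin n) × EuclideanSpace ℝ (Fin n),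
      p ∈ G ↔ ∀ q ∈ G, 0 ≤ ⟪p.1 - q.1, p.2 - q.2⟫_ℝ := by
    intro p
    constructor
    · rintro ⟨y, hy, hp2⟩ q ⟨v, hv, hq2⟩
      rw [hp2, hq2]
      have h := hmono (p.1 + z) (q.1 + z) y v hy hv
      have e : (p.1 + z) - (q.1 + z) = p.1 - q.1 := by abel
      rw [e] at h
      rw [← smul_sub, real_inner_smul_right]
      exact mul_nonneg hlam.le h
    · intro h
      refine ⟨lam⁻¹ • p.2, ?_, ?_⟩
      · rw [hmax]
        intro x₂ y₂ hy₂
        have h2 := h (x₂ - z, lam • y₂) ⟨y₂, by rwa [sub_add_cancel], rfl⟩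
        have e1 : p.1 - (x₂ - z) = (p.1 + z) - x₂ := by abel
        rw [e1] at h2
        have e2 : lam⁻¹ • (p.2 - lam • y₂) = lam⁻¹ • p.2 - y₂ := by
          rw [smul_sub, smul_smul, inv_mul_cancel₀ hlam.ne', one_smul]
        calc (0:ℝ) ≤ lam⁻¹ * ⟪(p.1 + z) - x₂, p.2 - lam • y₂⟫_ℝ :=
              mul_nonneg (inv_nonneg.mpr hlam.le) h2
          _ = ⟪(p.1 + z) - x₂, lam⁻¹ • p.2 - y₂⟫_ℝ := by rw [← real_inner_smul_right, e2]
      · rw [smul_smul, mul_inv_cancel₀ hlam.ne', one_smul]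
  have hGne : G.Nonempty := ⟨(x₀ - z, lam • y₀), ⟨y₀, by rwa [sub_add_cancel], rfl⟩⟩
  obtain ⟨p, hpG, hsum⟩ := minty_core G hGne hGmax
  obtain ⟨y, hy, hp2⟩ := hpG
  refine ⟨p.1 + z, y, hy, ?_⟩
  have h0 : p.1 + lam • y = 0 := by rw [← hp2]; exact hsum
  have e : p.1 + z + lam • y = (p.1 + lam • y) + z := by abel
  rw [e, h0, zero_add]

/-- For a maximal monotone operator `A` on ℝⁿ, the closure of its domain
`D(A) = {x : A x ≠ ∅}` is a convex set. -/
theorem maximalMonotone_closure_domain_convex {n : ℕ}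
    (A : EuclideanSpace ℝ (Fin n) → Set (EuclideanSpace ℝ (Fin n)))
    (hmono : ∀ x₁ x₂ y₁ y₂, y₁ ∈ A x₁ → y₂ ∈ A x₂ → 0 ≤ ⟪x₁ - x₂, y₁ - y₂⟫_ℝ)
    (hmax : ∀ x₁ y₁,
      (y₁ ∈ A x₁ ↔ ∀ x₂ y₂, y₂ ∈ A x₂ → 0 ≤ ⟪x₁ - x₂, y₁ - y₂⟫_ℝ)) :
    Convex ℝ (closure {x | (A x).Nonempty}) := by
  set D := {x : EuclideanSpace ℝ (Fin n) | (A x).Nonempty} with hDdef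
  have hseg : ∀ a ∈ D, ∀ b ∈ D, ∀ s t : ℝ, 0 ≤ s → 0 ≤ t → s + t = 1 →
      s • a + t • b ∈ closure D := by
    intro a ha b hb s t hs ht hst
    obtain ⟨α, hα⟩ := ha
    obtain ⟨β, hβ⟩ := hb
    have ht' : t = 1 - s := by linarith
    subst ht'
    have hs1 : s ≤ 1 := by linarith
    rw [Metric.mem_closure_iff]
    intro ε hε
    set z := s • a + (1 - s) • b with hzdef
    set lam := min (ε ^ 2 / (4 * (‖a - z‖ * ‖α‖ + ‖b - z‖ * ‖β‖ + 1)))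
      (ε / (2 * (‖α‖ + ‖β‖ + 1))) with hlamdef
    have hlam : 0 < lam := lt_min (by positivity) (by positivity)
    obtain ⟨x, y, hy, hxy⟩ := minty_surjective A hmono hmax z lam hlam
    refine ⟨x, ⟨y, hy⟩, ?_⟩
    have hyeq : lam • y = z - x := by rw [← hxy]; abel
    have h1 := hmono x a y α hy hα
    have h2 := hmono x b y β hy hβ
    have e1 : ⟪x - a, z - x⟫_ℝ = lam * ⟪x - a, y⟫_ℝ := by rw [← hyeq, real_inner_smul_right]
    have e2 : ⟪x - b, z - x⟫_ℝ = lam * ⟪x - b, y⟫_ℝ := by rw [← hyeq, real_inner_smul_right]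
    have e3 : s • (x - a) + (1 - s) • (x - b) = x - z := by rw [hzdef]; module
    have e4 : s * ⟪x - a, z - x⟫_ℝ + (1 - s) * ⟪x - b, z - x⟫_ℝ = -‖x - z‖ ^ 2 := by
      rw [← real_inner_smul_left, ← real_inner_smul_left, ← inner_add_left, e3,
        show z - x = -(x - z) by abel, inner_neg_right, real_inner_self_eq_norm_sq]
    rw [e1, e2] at e4
    have h1' : ⟪x - a, α⟫_ℝ ≤ ⟪x - a, y⟫_ℝ := by rw [inner_sub_right] at h1; linarith
    have h2' : ⟪x - b, β⟫_ℝ ≤ ⟪x - b, y⟫_ℝ := by rw [inner_sub_right] at h2; linarith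
    have f1 : ⟪a - x, α⟫_ℝ = -⟪x - a, α⟫_ℝ := by
      rw [show a - x = -(x - a) by abel, inner_neg_left]
    have f2 : ⟪b - x, β⟫_ℝ = -⟪x - b, β⟫_ℝ := by
      rw [show b - x = -(x - b) by abel, inner_neg_left]
    have hmain : ‖x - z‖ ^ 2 ≤ lam * (s * ⟪a - x, α⟫_ℝ + (1 - s) * ⟪b - x, β⟫_ℝ) := by
      have m1 : s * (lam * ⟪x - a, α⟫_ℝ) ≤ s * (lam * ⟪x - a, y⟫_ℝ) :=
        mul_le_mul_of_nonneg_left (mul_le_mul_of_nonneg_left h1' hlam.le) hs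
      have m2 : (1 - s) * (lam * ⟪x - b, β⟫_ℝ) ≤ (1 - s) * (lam * ⟪x - b, y⟫_ℝ) :=
        mul_le_mul_of_nonneg_left (mul_le_mul_of_nonneg_left h2' hlam.le) (by linarith)
      rw [f1, f2]
      nlinarith [m1, m2, e4]
    have cs1 : ⟪a - x, α⟫_ℝ ≤ ‖a - x‖ * ‖α‖ := real_inner_le_norm _ _
    have cs2 : ⟪b - x, β⟫_ℝ ≤ ‖b - x‖ * ‖β‖ := real_inner_le_norm _ _
    have tr1 : ‖a - x‖ ≤ ‖a - z‖ + ‖x - z‖ := by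
      calc ‖a - x‖ = ‖(a - z) + (z - x)‖ := by rw [show a - x = (a - z) + (z - x) by abel]
        _ ≤ ‖a - z‖ + ‖z - x‖ := norm_add_le _ _
        _ = ‖a - z‖ + ‖x - z‖ := by rw [norm_sub_rev z x]
    have tr2 : ‖b - x‖ ≤ ‖b - z‖ + ‖x - z‖ := by
      calc ‖b - x‖ = ‖(b - z) + (z - x)‖ := by rw [show b - x = (b - z) + (z - x) by abel]
        _ ≤ ‖b - z‖ + ‖z - x‖ := norm_add_le _ _
        _ = ‖b - z‖ + ‖x - z‖ := by rw [norm_sub_rev z x]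
    have hP1 : ⟪a - x, α⟫_ℝ ≤ (‖a - z‖ + ‖x - z‖) * ‖α‖ :=
      cs1.trans (mul_le_mul_of_nonneg_right tr1 (norm_nonneg _))
    have hP2 : ⟪b - x, β⟫_ℝ ≤ (‖b - z‖ + ‖x - z‖) * ‖β‖ :=
      cs2.trans (mul_le_mul_of_nonneg_right tr2 (norm_nonneg _))
    have hfin : ‖x - z‖ < ε :=
      seg_arith ‖x - z‖ s lam ε ‖a - z‖ ‖b - z‖ ‖α‖ ‖β‖ ⟪a - x, α⟫_ℝ ⟪b - x, β⟫_ℝ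
        hs hs1 hlam hε (norm_nonneg _) (norm_nonneg _) (norm_nonneg _)
        (norm_nonneg _) (norm_nonneg _) hP1 hP2 hmain (min_le_left _ _) (min_le_right _ _)
    rw [dist_eq_norm, norm_sub_rev]
    exact hfin
  intro x hx y hy s t hs ht hst
  have hDimg : ((fun p : EuclideanSpace ℝ (Fin n) × EuclideanSpace ℝ (Fin n) =>
      s • p.1 + t • p.2) '' (D ×ˢ D)) ⊆ closure D := by
    rintro _ ⟨⟨u, v⟩, ⟨hu, hv⟩, rfl⟩
    exact hseg u hu v hv s t hs ht hst
  have hcont : Continuous fun p : EuclideanSpace ℝ (Fin n) × EuclideanSpace ℝ (Fin n) =>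
      s • p.1 + t • p.2 := by fun_prop
  have hxy : (x, y) ∈ closure (D ×ˢ D) := by rw [closure_prod_eq]; exact ⟨hx, hy⟩
  have himg := image_closure_subset_closure_image hcont (Set.mem_image_of_mem _ hxy)
  have hfin := closure_mono hDimg himg
  rwa [closure_closure] at hfin
end

section
/- Suppose h_k, h ∈ C_b(S) (continuous bounded functions on a metric space S) with h_k → h uniformly on a set B ⊆ S, sup_k ‖h_k‖_∞ ≤ M, ‖h‖_∞ ≤ M, and let X be an S-valued random variable with P(X ∉ B) ≤ e^{-3M/ε} for some ε ∈ (0,1). If sup_{x∈B}|h_k(x) - h(x)| ≤ η with 0 < η < M, then |ε log E[exp(-h_k(X)/ε)] - ε log E[exp(-h(X)/ε)]| ≤ η + 4ε e^{-(M-η)/ε}. -/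
/-!
Off the exceptional event `{X ∉ B}` the two integrands `exp (-hₖ(X)/ε)` and `exp (-h(X)/ε)`
differ by a factor at most `exp (η/ε)`. On it both are at most `exp (M/ε)`, and since the event
has probability at most `exp (-3M/ε)`, its contribution is at most `exp (-2M/ε)`, i.e. at most
`exp (-M/ε)` times the integral itself, which is bounded below by `exp (-M/ε)`. Taking logarithms
with `log (1 + s) ≤ s` gives the sharper bound `η + ε exp (-M/ε)` in each direction.
-/

open MeasureTheory

section

variable {Ω : Type*} [MeasurableSpace Ω] {μ : Measure Ω}

lemma integral_le_integral_add_mul_measureReal [IsFiniteMeasure μ] {f g : Ω → ℝ}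
    (hf : Integrable f μ) (hg : Integrable g μ) {A : Set Ω} {C : ℝ} (hC : 0 ≤ C)
    (hfg : ∀ ω ∉ A, f ω ≤ g ω) (hfA : ∀ ω ∈ A, f ω ≤ g ω + C) :
    ∫ ω, f ω ∂μ ≤ ∫ ω, g ω ∂μ + C * μ.real A := by
  -- `A` need not be measurable; its measurable hull has the same measure, and `0 ≤ C` lets the
  -- bound on `A` extend to the hull.
  set T := toMeasurable μ A
  have hT : MeasurableSet T := measurableSet_toMeasurable μ A
  have hpt : ∀ ω, f ω ≤ g ω + T.indicator (fun _ ↦ C) ω := by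
    intro ω
    by_cases hωA : ω ∈ A
    · rw [Set.indicator_of_mem (subset_toMeasurable μ A hωA)]
      exact hfA ω hωA
    · have := Set.indicator_nonneg (fun _ _ ↦ hC) ω (s := T)
      linarith [hfg ω hωA]
  calc ∫ ω, f ω ∂μ ≤ ∫ ω, g ω + T.indicator (fun _ ↦ C) ω ∂μ :=
        integral_mono hf (hg.add ((integrable_const C).indicator hT)) hpt
    _ = ∫ ω, g ω ∂μ + C * μ.real A := by
        rw [integral_add hg ((integrable_const C).indicator hT), integral_indicator_const C hT,
          smul_eq_mul, measureReal_def, measure_toMeasurable, ← measureReal_def, mul_comm]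

noncomputable def laplaceFunctional (μ : Measure Ω) (ε : ℝ) (F : Ω → ℝ) : ℝ :=
  ε * Real.log (∫ ω, Real.exp (-F ω / ε) ∂μ)

variable {F G : Ω → ℝ} {M ε : ℝ}

lemma Real.exp_neg_div_mem_Icc_of_abs_le {x : ℝ} (hx : |x| ≤ M) (hε : 0 ≤ ε) :
    Real.exp (-x / ε) ∈ Set.Icc (Real.exp (-M / ε)) (Real.exp (M / ε)) := by
  obtain ⟨hMx, hxM⟩ := abs_le.1 hx
  exact ⟨Real.exp_le_exp.2 (div_le_div_of_nonneg_right (by linarith) hε),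
    Real.exp_le_exp.2 (div_le_div_of_nonneg_right (by linarith) hε)⟩

lemma integrable_exp_neg_div_of_abs_le [IsFiniteMeasure μ] (hF : AEMeasurable F μ)
    (hFM : ∀ ω, |F ω| ≤ M) (hε : 0 ≤ ε) : Integrable (fun ω ↦ Real.exp (-F ω / ε)) μ :=
  .of_bound (hF.neg.div_const ε).exp.aestronglyMeasurable (Real.exp (M / ε)) <|
    .of_forall fun ω ↦ by
      rw [Real.norm_of_nonneg (Real.exp_pos _).le]
      exact (Real.exp_neg_div_mem_Icc_of_abs_le (hFM ω) hε).2

lemma exp_neg_div_le_integral_exp_neg_div [IsProbabilityMeasure μ] (hF : AEMeasurable F μ)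
    (hFM : ∀ ω, |F ω| ≤ M) (hε : 0 ≤ ε) :
    Real.exp (-M / ε) ≤ ∫ ω, Real.exp (-F ω / ε) ∂μ := by
  calc Real.exp (-M / ε) = ∫ _, Real.exp (-M / ε) ∂μ := by simp
    _ ≤ ∫ ω, Real.exp (-F ω / ε) ∂μ :=
      integral_mono (integrable_const _) (integrable_exp_neg_div_of_abs_le hF hFM hε)
        fun ω ↦ (Real.exp_neg_div_mem_Icc_of_abs_le (hFM ω) hε).1

variable [IsProbabilityMeasure μ] (hF : AEMeasurable F μ) (hG : AEMeasurable G μ)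
  (hFM : ∀ ω, |F ω| ≤ M) (hGM : ∀ ω, |G ω| ≤ M) (hε : 0 < ε) {η : ℝ} (hη : 0 ≤ η)
  {A : Set Ω} (hA : μ.real A ≤ Real.exp (-(3 * M) / ε)) (hFG : ∀ ω ∉ A, G ω - η ≤ F ω)
include hF hG hFM hGM hε hη hA hFG

lemma integral_exp_neg_div_le_mul_one_add :
    ∫ ω, Real.exp (-F ω / ε) ∂μ ≤
      Real.exp (η / ε) * (∫ ω, Real.exp (-G ω / ε) ∂μ) * (1 + Real.exp (-M / ε)) := by
  set IG := ∫ ω, Real.exp (-G ω / ε) ∂μ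
  have hIG : Real.exp (-M / ε) ≤ IG := exp_neg_div_le_integral_exp_neg_div hG hGM hε.le
  have hoff : ∀ ω ∉ A, Real.exp (-F ω / ε) ≤ Real.exp (η / ε) * Real.exp (-G ω / ε) := by
    intro ω hω
    rw [← Real.exp_add, ← add_div]
    exact Real.exp_le_exp.2 (div_le_div_of_nonneg_right (by linarith [hFG ω hω]) hε.le)
  have hon : ∀ ω ∈ A, Real.exp (-F ω / ε) ≤
      Real.exp (η / ε) * Real.exp (-G ω / ε) + Real.exp (M / ε) := fun ω _ ↦ by
    have := (Real.exp_neg_div_mem_Icc_of_abs_le (hFM ω) hε.le).2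
    have := mul_pos (Real.exp_pos (η / ε)) (Real.exp_pos (-G ω / ε))
    linarith
  have hsplit := integral_le_integral_add_mul_measureReal
    (integrable_exp_neg_div_of_abs_le hF hFM hε.le)
    ((integrable_exp_neg_div_of_abs_le hG hGM hε.le).const_mul (Real.exp (η / ε)))
    (Real.exp_pos _).le hoff hon
  rw [integral_const_mul] at hsplit
  have htail : Real.exp (M / ε) * μ.real A ≤ Real.exp (η / ε) * IG * Real.exp (-M / ε) :=
    calc Real.exp (M / ε) * μ.real A ≤ Real.exp (M / ε) * Real.exp (-(3 * M) / ε) := by gcongr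
      _ = Real.exp (-M / ε) * Real.exp (-M / ε) := by rw [← Real.exp_add, ← Real.exp_add]; ring_nf
      _ ≤ 1 * IG * Real.exp (-M / ε) := by rw [one_mul, mul_comm]; gcongr
      _ ≤ Real.exp (η / ε) * IG * Real.exp (-M / ε) := by
        gcongr
        exact Real.one_le_exp (div_nonneg hη hε.le)
  linarith

lemma laplaceFunctional_le_add :
    laplaceFunctional μ ε F ≤ laplaceFunctional μ ε G + η + ε * Real.exp (-M / ε) := by
  have hIF := (Real.exp_pos _).trans_le (exp_neg_div_le_integral_exp_neg_div hF hFM hε.le)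
  have hIG := (Real.exp_pos _).trans_le (exp_neg_div_le_integral_exp_neg_div hG hGM hε.le)
  have hlog := Real.log_le_log hIF
    (integral_exp_neg_div_le_mul_one_add hF hG hFM hGM hε hη hA hFG)
  rw [Real.log_mul (by positivity) (by positivity), Real.log_mul (by positivity) hIG.ne',
    Real.log_exp] at hlog
  have hlog_one_add : Real.log (1 + Real.exp (-M / ε)) ≤ Real.exp (-M / ε) := by
    linarith [Real.log_le_sub_one_of_pos (by positivity : (0 : ℝ) < 1 + Real.exp (-M / ε))]
  calc laplaceFunctional μ ε F
      ≤ ε * (η / ε + Real.log (∫ ω, Real.exp (-G ω / ε) ∂μ) + Real.exp (-M / ε)) :=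
        mul_le_mul_of_nonneg_left (by linarith) hε.le
    _ = laplaceFunctional μ ε G + η + ε * Real.exp (-M / ε) := by
        rw [mul_add, mul_add, mul_div_cancel₀ η hε.ne', laplaceFunctional]; ring

end

theorem laplace_functional_approximation_general {S : Type*} [MetricSpace S] [MeasurableSpace S] [BorelSpace S]
    {Ω : Type*} [MeasurableSpace Ω] (P : Measure Ω) [IsProbabilityMeasure P]
    (hk h : S → ℝ) (hkc : Continuous hk) (hc : Continuous h)
    (M : ℝ) (hkb : ∀ x, |hk x| ≤ M) (hb : ∀ x, |h x| ≤ M)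
    (B : Set S) (X : Ω → S) (hX : Measurable X)
    (ε : ℝ) (hε : ε ∈ Set.Ioo (0:ℝ) 1)
    (hP : (P {ω | X ω ∉ B}).toReal ≤ Real.exp (-(3 * M) / ε))
    (η : ℝ) (hη : 0 < η)
    (happrox : ∀ x ∈ B, |hk x - h x| ≤ η) :
    |ε * Real.log (∫ ω, Real.exp (-(hk (X ω)) / ε) ∂P) -
      ε * Real.log (∫ ω, Real.exp (-(h (X ω)) / ε) ∂P)| ≤
      η + 4 * ε * Real.exp (-(M - η) / ε) := by
  have hε0 := hε.1
  have hF : AEMeasurable (fun ω ↦ hk (X ω)) P := (hkc.measurable.comp hX).aemeasurable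
  have hG : AEMeasurable (fun ω ↦ h (X ω)) P := (hc.measurable.comp hX).aemeasurable
  have hle := laplaceFunctional_le_add hF hG (fun _ ↦ hkb _) (fun _ ↦ hb _) hε0 hη.le hP
    fun ω hω ↦ by linarith [(abs_le.1 (happrox _ (not_not.1 hω))).1]
  have hge := laplaceFunctional_le_add hG hF (fun _ ↦ hb _) (fun _ ↦ hkb _) hε0 hη.le hP
    fun ω hω ↦ by linarith [(abs_le.1 (happrox _ (not_not.1 hω))).2]
  have hexp : ε * Real.exp (-M / ε) ≤ 4 * ε * Real.exp (-(M - η) / ε) := by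
    have : Real.exp (-M / ε) ≤ Real.exp (-(M - η) / ε) :=
      Real.exp_le_exp.2 (div_le_div_of_nonneg_right (by linarith) hε0.le)
    nlinarith [Real.exp_pos (-M / ε)]
  change |laplaceFunctional P ε (fun ω ↦ hk (X ω)) - laplaceFunctional P ε (fun ω ↦ h (X ω))| ≤ _
  exact abs_sub_le_iff.2 ⟨by linarith, by linarith⟩

/-- Stability of the Laplace functional `ε log E[exp(-h(X)/ε)]` under uniform approximation
of `h` on a set `B` of overwhelming probability. -/
theorem laplace_functional_approximation {S : Type*} [MetricSpace S] [MeasurableSpace S] [BorelSpace S]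
    {Ω : Type*} [MeasurableSpace Ω] (P : Measure Ω) [IsProbabilityMeasure P]
    (hk h : S → ℝ) (hkc : Continuous hk) (hc : Continuous h)
    (M : ℝ) (hkb : ∀ x, |hk x| ≤ M) (hb : ∀ x, |h x| ≤ M)
    (B : Set S) (X : Ω → S) (hX : Measurable X)
    (ε : ℝ) (hε : ε ∈ Set.Ioo (0:ℝ) 1)
    (hP : (P {ω | X ω ∉ B}).toReal ≤ Real.exp (-(3 * M) / ε))
    (η : ℝ) (hη : 0 < η) (hηM : η < M)
    (happrox : ∀ x ∈ B, |hk x - h x| ≤ η) :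
    |ε * Real.log (∫ ω, Real.exp (-(hk (X ω)) / ε) ∂P) -
      ε * Real.log (∫ ω, Real.exp (-(h (X ω)) / ε) ∂P)| ≤
      η + 4 * ε * Real.exp (-(M - η) / ε) :=
  laplace_functional_approximation_general P hk h hkc hc M hkb hb B X hX ε hε hP η hη happrox
end
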